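/- arXiv:math/0411459 — 3 statements merged into one kernel-verified Lean document; each statement's English description precedes it below -/
import Mathlib

section
/- If A is a finite subset of Z^d and B is the set of sites that A separates from infinity (i.e., every infinite nearest-neighbour self-avoiding path starting in B meets A), then |A| ≥ |B|^{1 - 1/d}. -/
open MeasureTheory ProbabilityTheory Filter

/-- Sites of the lattice `ℤ^d`. -/
abbrev Pt (d : ℕ) := Fin d → ℤ

/-- Nearest-neighbour adjacency in `ℤ^d`: the two sites differ by `1` in exactly one
coordinate. -/
def nnAdj {d : ℕ} (x y : Pt d) : Prop := (∑ i, (x i - y i).natAbs) = 1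

/-- A set of sites is connected in the nearest-neighbour graph. -/
def connSet {d : ℕ} (A : Set (Pt d)) : Prop :=
  ∀ x ∈ A, ∀ y ∈ A, Relation.ReflTransGen (fun a b => nnAdj a b ∧ a ∈ A ∧ b ∈ A) x y

/-- A finite set of sites is connected in the nearest-neighbour graph. -/
def connFinset {d : ℕ} (A : Finset (Pt d)) : Prop := connSet (A : Set (Pt d))

/-- The box `B_n = {0, …, n-1}^d`. -/
noncomputable def boxF (d n : ℕ) : Finset (Pt d) := Fintype.piFinset fun _ => Finset.Ico (0:ℤ) (n:ℤ)

/-!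
Fix a coordinate direction `i`. From a site `x` separated from infinity by `A`, the ray
`x, x + e_i, x + 2e_i, …` is an infinite self-avoiding path, so it meets `A`; hence the
projection of `B` forgetting the `i`-th coordinate lies in the projection of `A`, and has at
most `|A|` elements. The discrete Loomis–Whitney inequality `|B|^{d-1} ≤ ∏_i |π_i B|` then
gives `|B|^{d-1} ≤ |A|^d`.

Loomis–Whitney is proved by induction on the number of coordinates: slice `T` along one
coordinate, bound each slice by the induction hypothesis and by the projection forgetting that
coordinate, and recombine the slices with the generalized Hölder inequality.
-/

open Finset ENNReal

theorem ENNReal.sum_prod_rpow_inv_card_le {β κ : Type*} (u : Finset β) {s : Finset κ}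
    (hs : s.Nonempty) (f : κ → β → ℝ≥0∞) :
    ∑ t ∈ u, ∏ i ∈ s, f i t ^ (#s : ℝ)⁻¹ ≤ ∏ i ∈ s, (∑ t ∈ u, f i t) ^ (#s : ℝ)⁻¹ := by
  let _ : MeasurableSpace β := ⊤
  have : DiscreteMeasurableSpace β := ⟨fun _ => trivial⟩
  have hcard : (#s : ℝ) ≠ 0 := by exact_mod_cast hs.card_pos.ne'
  simpa [lintegral_finset, hcard] using
    lintegral_prod_norm_pow_le (μ := Measure.count.restrict u) s
      (fun i _ => (Measurable.of_discrete (f := f i)).aemeasurable)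
      (p := fun _ => (#s : ℝ)⁻¹) (by simp [hcard]) (fun _ _ => by positivity)

theorem ENNReal.sum_pow_card_le_mul_prod_sum {β κ : Type*} (u : Finset β) {s : Finset κ}
    (hs : s.Nonempty) {a : β → ℝ≥0∞} {c : ℝ≥0∞} {F : κ → β → ℝ≥0∞}
    (h : ∀ t ∈ u, a t ^ #s ≤ c * ∏ i ∈ s, F i t) :
    (∑ t ∈ u, a t) ^ #s ≤ c * ∏ i ∈ s, ∑ t ∈ u, F i t := by
  have hn : (0 : ℝ) < #s := by exact_mod_cast hs.card_pos
  have hroot : ∀ {x y : ℝ≥0∞}, x ≤ y ^ (#s : ℝ)⁻¹ ↔ x ^ #s ≤ y := by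
    intro x y; rw [le_rpow_inv_iff hn, rpow_natCast]
  rw [← hroot, mul_rpow_of_nonneg _ _ (by positivity), ← prod_rpow_of_nonneg (by positivity)]
  calc ∑ t ∈ u, a t
      ≤ ∑ t ∈ u, c ^ (#s : ℝ)⁻¹ * ∏ i ∈ s, F i t ^ (#s : ℝ)⁻¹ := by
        refine sum_le_sum fun t ht => ?_
        rw [prod_rpow_of_nonneg (by positivity), ← mul_rpow_of_nonneg _ _ (by positivity)]
        exact hroot.2 (h t ht)
    _ ≤ c ^ (#s : ℝ)⁻¹ * ∏ i ∈ s, (∑ t ∈ u, F i t) ^ (#s : ℝ)⁻¹ := by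
        rw [← mul_sum]
        gcongr
        exact sum_prod_rpow_inv_card_le u hs F

namespace Finset

variable {ι : Type*} [DecidableEq ι] {π : ι → Type*} [∀ i, DecidableEq (π i)]

lemma injOn_restrict_filter_of_injOn_restrict_insert {a : ι} {s : Finset ι}
    {T : Finset (∀ i, π i)} (hT : Set.InjOn (insert a s).restrict (T : Set (∀ i, π i)))
    (t : π a) :
    Set.InjOn s.restrict (({x ∈ T | x a = t} : Finset _) : Set (∀ i, π i)) := by
  intro x hx y hy hxy
  rw [mem_coe, mem_filter] at hx hy
  refine hT hx.1 hy.1 (funext fun ⟨j, hj⟩ => ?_)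
  rcases mem_insert.1 hj with rfl | hj
  · exact hx.2.trans hy.2.symm
  · exact congrFun hxy ⟨j, hj⟩

lemma sum_card_image_restrict_filter_le {a : ι} (r : Finset ι) (T : Finset (∀ i, π i))
    (u : Finset (π a)) :
    ∑ t ∈ u, #({x ∈ T | x a = t}.image r.restrict) ≤ #(T.image (insert a r).restrict) := by
  set g := (insert a r).restrict (π := π)
  have ha : a ∈ insert a r := mem_insert_self a r
  calc ∑ t ∈ u, #({x ∈ T | x a = t}.image r.restrict)
      ≤ ∑ t ∈ u, #{z ∈ T.image g | z ⟨a, ha⟩ = t} := by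
        refine sum_le_sum fun t _ => ?_
        rw [← restrict₂_comp_restrict (subset_insert a r), ← image_image]
        refine card_image_le.trans (card_le_card ?_)
        intro z hz
        obtain ⟨x, hx, rfl⟩ := mem_image.1 hz
        rw [mem_filter] at hx
        exact mem_filter.2 ⟨mem_image_of_mem _ hx.1, hx.2⟩
    _ ≤ #(T.image g) := by
        rw [sum_card_fiberwise_eq_card_filter]
        exact card_filter_le _ _

/-- The discrete Loomis–Whitney inequality. -/
theorem card_pow_le_prod_card_image_restrict {s : Finset ι} {T : Finset (∀ i, π i)}
    (hT : T.Nonempty) (hinj : Set.InjOn s.restrict (T : Set (∀ i, π i))) :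
    #T ^ (#s - 1) ≤ ∏ i ∈ s, #(T.image (s.erase i).restrict) := by
  induction s using Finset.induction_on generalizing T with
  | empty => simp
  | insert a s ha ih =>
  rw [card_insert_of_notMem ha, Nat.add_sub_cancel, prod_insert ha, erase_insert ha]
  rcases s.eq_empty_or_nonempty with rfl | hs
  · simpa using (hT.image (∅ : Finset ι).restrict).card_pos
  set slice : π a → Finset (∀ i, π i) := fun t => {x ∈ T | x a = t}
  have hslice : ∀ t ∈ T.image (· a), #(slice t) ^ #s ≤
      #(T.image s.restrict) * ∏ i ∈ s, #((slice t).image (s.erase i).restrict) := by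
    intro t ht
    have hinj_t := injOn_restrict_filter_of_injOn_restrict_insert hinj t
    have hne : (slice t).Nonempty := by
      obtain ⟨x, hx, rfl⟩ := mem_image.1 ht
      exact ⟨x, mem_filter.2 ⟨hx, rfl⟩⟩
    rw [← Nat.sub_add_cancel hs.card_pos, pow_succ']
    refine Nat.mul_le_mul ?_ (ih hne hinj_t)
    rw [← card_image_of_injOn hinj_t]
    exact card_le_card (image_subset_image (filter_subset _ _))
  calc #T ^ #s = (∑ t ∈ T.image (· a), #(slice t)) ^ #s := by rw [← card_eq_sum_card_image]
    _ ≤ #(T.image s.restrict) *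
          ∏ i ∈ s, ∑ t ∈ T.image (· a), #((slice t).image (s.erase i).restrict) := by
      have := ENNReal.sum_pow_card_le_mul_prod_sum (T.image (· a)) hs
        (a := fun t => (#(slice t) : ℝ≥0∞)) (c := #(T.image s.restrict))
        (F := fun i t => #((slice t).image (s.erase i).restrict))
        (fun t ht => by exact_mod_cast hslice t ht)
      exact_mod_cast this
    _ ≤ #(T.image s.restrict) * ∏ i ∈ s, #(T.image ((insert a s).erase i).restrict) := by
      refine Nat.mul_le_mul_left _ (prod_le_prod' fun i hi => ?_)
      rw [erase_insert_of_ne (ne_of_mem_of_not_mem hi ha).symm]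
      exact sum_card_image_restrict_filter_le _ _ _

end Finset

def SeparatesFromInfinity {d : ℕ} (A : Finset (Pt d)) (x : Pt d) : Prop :=
  ∀ p : ℕ → Pt d, p 0 = x → Function.Injective p → (∀ n, nnAdj (p n) (p (n+1))) → ∃ n, p n ∈ A

lemma nnAdj_update_add_one {d : ℕ} (x : Pt d) (i : Fin d) (t : ℤ) :
    nnAdj (Function.update x i t) (Function.update x i (t + 1)) := by
  unfold nnAdj
  rw [Fintype.sum_eq_single i fun j hj => by simp [Function.update_of_ne hj]]
  simp

lemma SeparatesFromInfinity.exists_mem_restrict_erase_eq {d : ℕ} {A : Finset (Pt d)} {x : Pt d}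
    (hx : SeparatesFromInfinity A x) (i : Fin d) :
    ∃ y ∈ A, (univ.erase i).restrict y = (univ.erase i).restrict x := by
  let ray : ℕ → Pt d := fun n => Function.update x i (x i + n)
  have hinj : Function.Injective ray := fun m n h => by
    simpa [ray] using congrFun h i
  obtain ⟨n, hn⟩ := hx ray (by simp [ray]) hinj fun n => by
    simpa [ray, add_assoc] using nnAdj_update_add_one x i (x i + n)
  refine ⟨ray n, hn, funext fun ⟨j, hj⟩ => ?_⟩
  simp [ray, Function.update_of_ne (ne_of_mem_erase hj)]

lemma card_image_restrict_erase_le {d : ℕ} {A B : Finset (Pt d)}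
    (hB : ∀ x ∈ B, SeparatesFromInfinity A x) (i : Fin d) :
    #(B.image (univ.erase i).restrict) ≤ #A := by
  calc #(B.image (univ.erase i).restrict) ≤ #(A.image (univ.erase i).restrict) := by
        refine card_le_card fun z hz => ?_
        obtain ⟨x, hx, rfl⟩ := mem_image.1 hz
        obtain ⟨y, hy, hyx⟩ := (hB x hx).exists_mem_restrict_erase_eq i
        exact hyx ▸ mem_image_of_mem _ hy
    _ ≤ #A := card_image_le

lemma Real.rpow_one_sub_inv_le_of_pow_le {a b : ℝ} {d : ℕ} (hd : d ≠ 0) (ha : 0 ≤ a)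
    (hb : 0 ≤ b) (h : b ^ (d - 1) ≤ a ^ d) : b ^ (1 - 1 / (d : ℝ)) ≤ a := by
  rw [← pow_le_pow_iff_left₀ (by positivity) ha hd, ← Real.rpow_natCast, ← Real.rpow_mul hb]
  refine le_of_eq_of_le ?_ h
  rw [← Real.rpow_natCast, Nat.cast_sub (Nat.one_le_iff_ne_zero.2 hd)]
  field_simp
  ring_nf

/-- If `A` is a finite subset of `ℤ^d` and `B` is the set of sites that
`A` separates from infinity (every infinite self-avoiding nearest-neighbour path starting
in `B` meets `A`), then `|A| ≥ |B|^{1 - 1/d}`. -/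
theorem stmt0 (d : ℕ) (hd : 2 ≤ d) (A : Finset (Pt d)) (B : Set (Pt d))
    (hB : B = {x : Pt d | ∀ p : ℕ → Pt d, p 0 = x → Function.Injective p →
      (∀ n, nnAdj (p n) (p (n+1))) → ∃ n, p n ∈ A}) :
    (B.ncard : ℝ) ^ (1 - 1/(d:ℝ)) ≤ (A.card : ℝ) := by
  change B = {x | SeparatesFromInfinity A x} at hB
  by_cases hB0 : B.ncard = 0
  · have hexp : (0 : ℝ) < 1 - 1 / d := by
      rw [sub_pos, div_lt_one (by positivity)]
      exact_mod_cast (by omega : 1 < d)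
    rw [hB0, Nat.cast_zero, Real.zero_rpow hexp.ne']
    positivity
  obtain ⟨Bf, rfl⟩ := (Set.finite_of_ncard_ne_zero hB0).exists_finset_coe
  have hinj : Set.InjOn (univ : Finset (Fin d)).restrict (Bf : Set (Pt d)) :=
    fun x _ y _ h => funext fun i => congrFun h ⟨i, mem_univ i⟩
  have hLW : #Bf ^ (d - 1) ≤ #A ^ d := by
    have hne : Bf.Nonempty := Set.nonempty_of_ncard_ne_zero hB0
    simpa using (card_pow_le_prod_card_image_restrict hne hinj).trans
      (prod_le_prod' fun i _ => card_image_restrict_erase_le hB.subset i)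
  rw [Set.ncard_coe_finset]
  exact Real.rpow_one_sub_inv_le_of_pow_le (by omega) (by positivity) (by positivity)
    (by exact_mod_cast hLW)
end

section
/- For A ⊆ B_n = {0,…,n-1}^d with |A| ≤ n^d/2, the boundary of A within the box satisfies |∂_{B_n} A| ≥ (1/(2d)) |A|^{1-1/d}, where ∂_{B_n} A is the set of sites of B_n \ A adjacent (nearest-neighbour) to a site of A. -/
open MeasureTheory ProbabilityTheory Filter

/-- `x` lies in the box `{0,…,n-1}^d`. -/
def inBox (d n : ℕ) (x : Pt d) : Prop := ∀ i, 0 ≤ x i ∧ x i < (n:ℤ)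

/-!
By the discrete Loomis–Whitney inequality some coordinate projection `P` of `A` (say along
direction `i`) has `|P| ≥ |A|^(1-1/d)`. Every line in direction `i` through a point of `P`
either lies entirely in `A` — there are at most `|A|/n ≤ 2^(-1/d) |A|^(1-1/d)` such lines,
because `|A| ≤ n^d/2` — or meets the boundary of `A` in the box, and boundary sites found on
different lines are different. Hence `|∂A| ≥ (1 - 2^(-1/d)) |A|^(1-1/d)`, and Bernoulli's
inequality `(1 - 1/(2d))^d ≥ 1/2` gives `1 - 2^(-1/d) ≥ 1/(2d)`.
-/

open Finset Function
open scoped ENNReal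

theorem ENNReal.sum_prod_rpow_le_prod_sum_rpow {ι κ : Type*} (s : Finset ι) (T : Finset κ)
    (f : ι → κ → ℝ≥0∞) {p : ι → ℝ} (hp : ∑ i ∈ s, p i = 1) (h2p : ∀ i ∈ s, 0 ≤ p i) :
    ∑ t ∈ T, ∏ i ∈ s, f i t ^ p i ≤ ∏ i ∈ s, (∑ t ∈ T, f i t) ^ p i := by
  let _ : MeasurableSpace κ := ⊤
  have := lintegral_prod_norm_pow_le (μ := Measure.count.restrict (T : Set κ)) s (f := f)
    (fun i _ => Measurable.of_discrete.aemeasurable) hp h2p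
  simpa [lintegral_finset] using this

-- Hölder's inequality with exponents `1/#s`, in the form of the inductive step of Loomis–Whitney.
theorem Nat.sum_pow_card_le_mul_prod {ι κ : Type*} {s : Finset ι} (hs : s.Nonempty)
    (V : Finset κ) (a : κ → ℕ) (c : ℕ) (q : ι → κ → ℕ) (P : ι → ℕ)
    (ha : ∀ t ∈ V, a t ^ #s ≤ c * ∏ i ∈ s, q i t) (hq : ∀ i ∈ s, ∑ t ∈ V, q i t ≤ P i) :
    (∑ t ∈ V, a t) ^ #s ≤ c * ∏ i ∈ s, P i := by
  set r : ℝ := (#s : ℝ)⁻¹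
  have hr : 0 ≤ r := by positivity
  have hk : (0 : ℝ) < #s := by exact_mod_cast hs.card_pos
  have hroot : ∀ t ∈ V, (a t : ℝ≥0∞) ≤ (c : ℝ≥0∞) ^ r * ∏ i ∈ s, (q i t : ℝ≥0∞) ^ r := by
    intro t ht
    rw [ENNReal.prod_rpow_of_nonneg hr, ← ENNReal.mul_rpow_of_nonneg _ _ hr,
      ENNReal.le_rpow_inv_iff hk, ENNReal.rpow_natCast]
    exact_mod_cast ha t ht
  have hsum : ((∑ t ∈ V, a t : ℕ) : ℝ≥0∞) ≤ ((c * ∏ i ∈ s, P i : ℕ) : ℝ≥0∞) ^ r :=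
    calc ((∑ t ∈ V, a t : ℕ) : ℝ≥0∞)
        ≤ ∑ t ∈ V, (c : ℝ≥0∞) ^ r * ∏ i ∈ s, (q i t : ℝ≥0∞) ^ r := by
          push_cast; exact sum_le_sum hroot
      _ ≤ (c : ℝ≥0∞) ^ r * ∏ i ∈ s, (∑ t ∈ V, (q i t : ℝ≥0∞)) ^ r := by
          rw [← mul_sum]
          gcongr
          exact ENNReal.sum_prod_rpow_le_prod_sum_rpow s V _
            (by simp [r, hk.ne']) (fun _ _ => hr)
      _ ≤ (c : ℝ≥0∞) ^ r * ∏ i ∈ s, (P i : ℝ≥0∞) ^ r := by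
          gcongr with i hi
          exact_mod_cast hq i hi
      _ = ((c * ∏ i ∈ s, P i : ℕ) : ℝ≥0∞) ^ r := by
          push_cast
          rw [ENNReal.mul_rpow_of_nonneg _ _ hr, ← ENNReal.prod_rpow_of_nonneg hr]
  rw [ENNReal.le_rpow_inv_iff hk, ENNReal.rpow_natCast] at hsum
  exact_mod_cast hsum

namespace Finset

variable {ι α : Type*} [DecidableEq ι] [DecidableEq α] [DecidableEq (ι → α)] [Zero α]

theorem card_filter_apply_eq_le_card_image_update (A : Finset (ι → α)) (i : ι) (t : α) :
    #{x ∈ A | x i = t} ≤ #(A.image (update · i 0)) := by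
  refine card_le_card_of_injOn _ (fun x hx => mem_image_of_mem _ (mem_filter.1 hx).1) ?_
  intro x hx y hy hxy
  have hx' : x i = t := (mem_filter.1 hx).2
  have hy' : y i = t := (mem_filter.1 hy).2
  calc x = update (update x i 0) i t := by rw [update_idem, ← hx', update_eq_self]
    _ = update (update y i 0) i t := congrArg (update · i t) hxy
    _ = y := by rw [update_idem, ← hy', update_eq_self]

theorem image_update_filter_apply_eq {i j : ι} (hij : i ≠ j) (A : Finset (ι → α)) (t : α) :
    {x ∈ A | x i = t}.image (update · j 0) = {y ∈ A.image (update · j 0) | y i = t} := by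
  rw [filter_image]
  congr 1
  exact filter_congr fun x _ => by rw [update_of_ne hij]

theorem sum_card_image_update_filter_apply_eq {i j : ι} (hij : i ≠ j) (A : Finset (ι → α)) :
    ∑ t ∈ A.image (· i), #({x ∈ A | x i = t}.image (update · j 0))
      = #(A.image (update · j 0)) := by
  simp_rw [image_update_filter_apply_eq hij]
  refine (card_eq_sum_card_fiberwise fun y hy => ?_).symm
  obtain ⟨x, hx, rfl⟩ := mem_image.1 hy
  simpa [update_of_ne hij] using mem_image_of_mem (· i) hx

theorem card_pow_le_prod_card_image_update_of_eqOn_compl (s : Finset ι) :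
    ∀ A : Finset (ι → α), A.Nonempty → (∀ x ∈ A, ∀ y ∈ A, Set.EqOn x y (↑s)ᶜ) →
      #A ^ (#s - 1) ≤ ∏ i ∈ s, #(A.image (update · i 0)) := by
  induction s using Finset.induction_on with
  | empty => simp
  | insert i₀ s hi₀ ih =>
    intro A hA hAs
    rw [card_insert_of_notMem hi₀, Nat.add_sub_cancel, prod_insert hi₀]
    rcases s.eq_empty_or_nonempty with rfl | hs
    · simpa [Nat.one_le_iff_ne_zero] using hA.ne_empty
    set S : α → Finset (ι → α) := fun t => {x ∈ A | x i₀ = t}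
    have hslice : ∀ t ∈ A.image (· i₀), #(S t) ^ #s
        ≤ #(A.image (update · i₀ 0)) * ∏ i ∈ s, #((S t).image (update · i 0)) := by
      intro t ht
      obtain ⟨x₀, hx₀, rfl⟩ := mem_image.1 ht
      have hS : (S (x₀ i₀)).Nonempty := ⟨x₀, mem_filter.2 ⟨hx₀, rfl⟩⟩
      have hSs : ∀ x ∈ S (x₀ i₀), ∀ y ∈ S (x₀ i₀), Set.EqOn x y (↑s)ᶜ := by
        intro x hx y hy j hj
        simp only [S, mem_filter] at hx hy
        by_cases hji : j = i₀
        · rw [hji, hx.2, hy.2]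
        · exact hAs x hx.1 y hy.1 (by simpa [hji] using hj)
      rw [← Nat.succ_pred_eq_of_pos hs.card_pos, pow_succ']
      exact Nat.mul_le_mul (card_filter_apply_eq_le_card_image_update A i₀ _)
        (ih _ hS hSs)
    rw [card_eq_sum_card_fiberwise fun x hx => mem_image_of_mem (· i₀) hx]
    refine Nat.sum_pow_card_le_mul_prod hs _ _ _ _ _ hslice fun i hi => ?_
    exact (sum_card_image_update_filter_apply_eq (ne_of_mem_of_not_mem hi hi₀).symm A).le

theorem card_pow_card_sub_one_le_prod_card_image_update [Fintype ι] {A : Finset (ι → α)}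
    (hA : A.Nonempty) :
    #A ^ (Fintype.card ι - 1) ≤ ∏ i, #(A.image (update · i 0)) :=
  card_pow_le_prod_card_image_update_of_eqOn_compl univ A hA (by simp)

theorem exists_card_pow_card_sub_one_le_card_image_update_pow [Fintype ι] [Nonempty ι]
    {A : Finset (ι → α)} (hA : A.Nonempty) :
    ∃ i, #A ^ (Fintype.card ι - 1) ≤ #(A.image (update · i 0)) ^ Fintype.card ι := by
  obtain ⟨i, -, hi⟩ := exists_max_image univ (fun i => #(A.image (update · i 0))) univ_nonempty
  exact ⟨i, (card_pow_card_sub_one_le_prod_card_image_update hA).trans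
    (prod_le_pow_card _ _ _ fun j _ => hi j (mem_univ j))⟩

end Finset

theorem Int.exists_mem_Ioc_not_and_sub_one {Q : ℤ → Prop} {a b : ℤ} (hab : a ≤ b) (ha : Q a)
    (hb : ¬Q b) : ∃ u ∈ Set.Ioc a b, ¬Q u ∧ Q (u - 1) := by
  induction b, hab using Int.leInduction with
  | base => exact absurd ha hb
  | succ b hab ih =>
    by_cases hQb : Q b
    · exact ⟨b + 1, ⟨by omega, le_rfl⟩, hb, by simpa using hQb⟩
    · obtain ⟨u, ⟨hau, hub⟩, hu⟩ := ih hQb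
      exact ⟨u, ⟨hau, by omega⟩, hu⟩

theorem Int.exists_mem_uIcc_not_and_natAbs_sub_eq_one {Q : ℤ → Prop} {a b : ℤ} (ha : Q a)
    (hb : ¬Q b) : ∃ u ∈ Set.uIcc a b, ¬Q u ∧ ∃ v, (v - u).natAbs = 1 ∧ Q v := by
  rcases le_total a b with hab | hba
  · obtain ⟨u, ⟨hau, hub⟩, hu, hQu⟩ := exists_mem_Ioc_not_and_sub_one hab ha hb
    exact ⟨u, Set.mem_uIcc.2 (Or.inl ⟨hau.le, hub⟩), hu, u - 1, by simp, hQu⟩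
  · obtain ⟨u, ⟨hau, hub⟩, hu, hQu⟩ :=
      exists_mem_Ioc_not_and_sub_one (Q := fun u => Q (-u)) (neg_le_neg hba)
        (by simpa using ha) (by simpa using hb)
    exact ⟨-u, Set.mem_uIcc.2 (Or.inr ⟨by omega, by omega⟩), hu, -(u - 1), by omega, hQu⟩

theorem mem_boxF {d n : ℕ} {x : Pt d} : x ∈ boxF d n ↔ inBox d n x := by
  simp [boxF, inBox]

theorem inBox_update {d n : ℕ} {x : Pt d} (hx : inBox d n x) (i : Fin d) {u : ℤ} (hu0 : 0 ≤ u)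
    (hun : u < n) : inBox d n (update x i u) := by
  intro j
  rcases eq_or_ne j i with rfl | hji
  · simpa using ⟨hu0, hun⟩
  · simpa [update_of_ne hji] using hx j

theorem nnAdj_update_update {d : ℕ} (x : Pt d) (i : Fin d) {u v : ℤ} (h : (u - v).natAbs = 1) :
    nnAdj (update x i u) (update x i v) := by
  unfold nnAdj
  rw [sum_eq_single i (fun j _ hji => by simp [update_of_ne hji]) (by simp)]
  simpa using h

open Classical in
noncomputable def boxBoundary (d n : ℕ) (A : Finset (Pt d)) : Finset (Pt d) :=
  {y ∈ boxF d n | y ∉ A ∧ ∃ x ∈ A, nnAdj x y}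

theorem mem_boxBoundary {d n : ℕ} {A : Finset (Pt d)} {y : Pt d} :
    y ∈ boxBoundary d n A ↔ inBox d n y ∧ y ∉ A ∧ ∃ x ∈ A, nnAdj x y := by
  simp [boxBoundary, mem_boxF]

noncomputable def fullLines {d : ℕ} (n : ℕ) (A : Finset (Pt d)) (i : Fin d) : Finset (Pt d) :=
  {p ∈ A.image (update · i 0) | ∀ t ∈ Ico (0 : ℤ) n, update p i t ∈ A}

theorem card_fullLines_mul_le {d : ℕ} (n : ℕ) (A : Finset (Pt d)) (i : Fin d) :
    n * #(fullLines n A i) ≤ #A := by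
  have hzero : ∀ p ∈ fullLines n A i, p i = 0 := by
    intro p hp
    obtain ⟨x, -, rfl⟩ := mem_image.1 (mem_filter.1 hp).1
    simp
  calc n * #(fullLines n A i) = #(fullLines n A i ×ˢ Ico (0 : ℤ) n) := by simp [mul_comm]
    _ ≤ #A := by
      refine card_le_card_of_injOn (fun q => update q.1 i q.2)
        (fun q hq => (mem_filter.1 (mem_product.1 hq).1).2 _ (mem_product.1 hq).2) ?_
      rintro ⟨p, t⟩ hpt ⟨q, s⟩ hqs h
      simp only [coe_product, Set.mem_prod, mem_coe] at hpt hqs h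
      have hp : update (update p i t) i 0 = p := by rw [update_idem, ← hzero p hpt.1, update_eq_self]
      have hq : update (update q i s) i 0 = q := by rw [update_idem, ← hzero q hqs.1, update_eq_self]
      rw [Prod.mk.injEq, ← hp, ← hq, h]
      simpa using congrFun h i

theorem exists_mem_boxBoundary_update_eq {d n : ℕ} {A : Finset (Pt d)}
    (hA : ∀ x ∈ A, inBox d n x) {x : Pt d} (hx : x ∈ A) {i : Fin d} {t : ℤ}
    (ht : t ∈ Ico (0 : ℤ) n) (hxt : update x i t ∉ A) :
    ∃ y ∈ boxBoundary d n A, update y i 0 = update x i 0 := by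
  obtain ⟨u, hu, hxu, v, hvu, hxv⟩ :=
    Int.exists_mem_uIcc_not_and_natAbs_sub_eq_one (Q := fun u => update x i u ∈ A) (a := x i)
      (by rwa [update_eq_self]) hxt
  have hxi := hA x hx i
  rw [mem_Ico] at ht
  rw [Set.mem_uIcc] at hu
  refine ⟨update x i u, mem_boxBoundary.2 ⟨?_, hxu, _, hxv, nnAdj_update_update x i hvu⟩, by simp⟩
  exact inBox_update (hA x hx) i (by omega) (by omega)

theorem card_image_update_le_card_boxBoundary_add_card_fullLines {d n : ℕ} {A : Finset (Pt d)}
    (hA : ∀ x ∈ A, inBox d n x) (i : Fin d) :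
    #(A.image (update · i 0)) ≤ #(boxBoundary d n A) + #(fullLines n A i) := by
  have hsub : A.image (update · i 0) \ fullLines n A i ⊆ (boxBoundary d n A).image (update · i 0) := by
    intro p hp
    rw [Finset.mem_sdiff, fullLines, mem_filter, not_and] at hp
    obtain ⟨t, ht, hxt⟩ := not_forall₂.1 (hp.2 hp.1)
    obtain ⟨x, hx, rfl⟩ := mem_image.1 hp.1
    obtain ⟨y, hy, hyx⟩ := exists_mem_boxBoundary_update_eq hA hx ht (by simpa using hxt)
    exact mem_image.2 ⟨y, hy, hyx⟩
  calc #(A.image (update · i 0))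
      ≤ #(A.image (update · i 0) \ fullLines n A i) + #(fullLines n A i) :=
        card_le_card_sdiff_add_card
    _ ≤ #((boxBoundary d n A).image (update · i 0)) + #(fullLines n A i) := by gcongr
    _ ≤ #(boxBoundary d n A) + #(fullLines n A i) := add_le_add_left card_image_le _

theorem Real.rpow_one_sub_one_div_le_of_pow_le {a p : ℝ} {d : ℕ} (hd : d ≠ 0) (ha : 0 ≤ a)
    (hp : 0 ≤ p) (h : a ^ (d - 1) ≤ p ^ d) : a ^ (1 - 1 / (d : ℝ)) ≤ p := by
  have hd' : (d : ℝ) ≠ 0 := by exact_mod_cast hd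
  calc a ^ (1 - 1 / (d : ℝ)) = (a ^ (d - 1)) ^ (1 / (d : ℝ)) := by
        rw [← Real.rpow_natCast, ← Real.rpow_mul ha, Nat.cast_pred (Nat.pos_of_ne_zero hd)]
        field_simp
    _ ≤ (p ^ d) ^ (1 / (d : ℝ)) := by gcongr
    _ = p := by rw [one_div, Real.pow_rpow_inv_natCast hp hd]

theorem Real.le_two_rpow_neg_mul_rpow_of_mul_le {a f n : ℝ} {d : ℕ} (hd : d ≠ 0) (ha : 0 ≤ a)
    (hn : 0 < n) (hf : n * f ≤ a) (han : a ≤ n ^ d / 2) :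
    f ≤ 2 ^ (-(1 / (d : ℝ))) * a ^ (1 - 1 / (d : ℝ)) := by
  have hroot : a ^ (1 / (d : ℝ)) ≤ n * 2 ^ (-(1 / (d : ℝ))) :=
    calc a ^ (1 / (d : ℝ)) ≤ (n ^ d / 2) ^ (1 / (d : ℝ)) := by gcongr
      _ = n * 2 ^ (-(1 / (d : ℝ))) := by
        rw [Real.div_rpow (by positivity) zero_le_two, one_div, Real.pow_rpow_inv_natCast hn.le hd,
          Real.rpow_neg zero_le_two, div_eq_mul_inv]
  refine le_of_mul_le_mul_left ?_ hn
  calc n * f ≤ a := hf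
    _ = a ^ (1 / (d : ℝ)) * a ^ (1 - 1 / (d : ℝ)) := by
      rw [← Real.rpow_add' ha (by simp), add_sub_cancel, Real.rpow_one]
    _ ≤ n * 2 ^ (-(1 / (d : ℝ))) * a ^ (1 - 1 / (d : ℝ)) := by gcongr
    _ = n * (2 ^ (-(1 / (d : ℝ))) * a ^ (1 - 1 / (d : ℝ))) := mul_assoc _ _ _

theorem Real.one_div_two_mul_le_one_sub_two_rpow_neg {d : ℕ} (hd : d ≠ 0) :
    1 / (2 * (d : ℝ)) ≤ 1 - 2 ^ (-(1 / (d : ℝ))) := by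
  have hd1 : (1 : ℝ) ≤ d := by exact_mod_cast Nat.one_le_iff_ne_zero.2 hd
  have hc : 0 ≤ 1 - 1 / (2 * (d : ℝ)) := by
    rw [sub_nonneg, div_le_one (by positivity)]
    linarith
  have hbern : (2 : ℝ)⁻¹ ≤ (1 - 1 / (2 * (d : ℝ))) ^ d := by
    have h := one_add_mul_le_pow (a := -(1 / (2 * (d : ℝ)))) (by
      rw [neg_le_neg_iff, div_le_iff₀ (by positivity)]; linarith) d
    have hd2 : (d : ℝ) * -(1 / (2 * d)) = -2⁻¹ := by field_simp
    simp only [hd2, ← sub_eq_add_neg] at h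
    linarith
  have : (2 : ℝ) ^ (-(1 / (d : ℝ))) ≤ 1 - 1 / (2 * (d : ℝ)) :=
    calc (2 : ℝ) ^ (-(1 / (d : ℝ))) = (2⁻¹) ^ (1 / (d : ℝ)) := by
          rw [Real.rpow_neg zero_le_two, Real.inv_rpow zero_le_two]
      _ ≤ ((1 - 1 / (2 * (d : ℝ))) ^ d) ^ (1 / (d : ℝ)) := by gcongr
      _ = 1 - 1 / (2 * (d : ℝ)) := by rw [one_div (d : ℝ), Real.pow_rpow_inv_natCast hc hd]
  linarith

/-- isoperimetric inequality in the cube, Bollobás–Leader. For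
`A ⊆ B_n = {0,…,n-1}^d` with `|A| ≤ n^d/2`, the boundary of `A` within the box —
the set of sites of `B_n \ A` that are nearest-neighbour adjacent to a site of `A` —
has at least `(1/(2d)) |A|^{1-1/d}` elements. -/
theorem stmt4 (d n : ℕ) (hd : 2 ≤ d) (A : Set (Pt d))
    (hA : A ⊆ {x | inBox d n x}) (hcard : (A.ncard : ℝ) ≤ (n:ℝ)^d / 2) :
    (1/(2*(d:ℝ))) * (A.ncard : ℝ) ^ (1 - 1/(d:ℝ))
      ≤ (({y : Pt d | inBox d n y ∧ y ∉ A ∧ ∃ x ∈ A, nnAdj x y}).ncard : ℝ) := by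
  obtain ⟨A, rfl⟩ : ∃ A' : Finset (Pt d), ↑A' = A :=
    ((boxF d n).finite_toSet.subset fun x hx => mem_boxF.2 (hA hx)).exists_finset_coe
  have hbox : ∀ x ∈ A, inBox d n x := fun x hx => hA hx
  have hd0 : d ≠ 0 := by omega
  rw [show {y | inBox d n y ∧ y ∉ (A : Set (Pt d)) ∧ ∃ x ∈ (A : Set (Pt d)), nnAdj x y}
    = ↑(boxBoundary d n A) by ext; simp [mem_boxBoundary]]
  simp only [Set.ncard_coe_finset] at hcard ⊢
  obtain rfl | ⟨x, hx⟩ := A.eq_empty_or_nonempty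
  · -- `0 ^ 0 = 1`, so the exponent `1 - 1/d` must be nonzero here.
    have hd1 : 1 / (d : ℝ) < 1 := by
      rw [div_lt_one (by positivity)]
      exact_mod_cast hd
    rw [card_empty, Nat.cast_zero, Real.zero_rpow (sub_pos.2 hd1).ne', mul_zero]
    positivity
  have : Nonempty (Fin d) := ⟨⟨0, by omega⟩⟩
  obtain ⟨i, hi⟩ := exists_card_pow_card_sub_one_le_card_image_update_pow ⟨x, hx⟩
  rw [Fintype.card_fin] at hi
  have hn : (0 : ℝ) < n := by exact_mod_cast (hbox x hx i).1.trans_lt (hbox x hx i).2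
  have hproj := Real.rpow_one_sub_one_div_le_of_pow_le hd0 (Nat.cast_nonneg #A)
    (Nat.cast_nonneg _) (by exact_mod_cast hi)
  have hfull := Real.le_two_rpow_neg_mul_rpow_of_mul_le (f := #(fullLines n A i)) hd0
    (Nat.cast_nonneg _) hn (by exact_mod_cast card_fullLines_mul_le n A i) hcard
  have hlines : (#(A.image (update · i 0)) : ℝ) ≤ #(boxBoundary d n A) + #(fullLines n A i) := by
    exact_mod_cast card_image_update_le_card_boxBoundary_add_card_fullLines hbox i
  calc 1 / (2 * (d : ℝ)) * #A ^ (1 - 1 / (d : ℝ))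
      ≤ (1 - 2 ^ (-(1 / (d : ℝ)))) * #A ^ (1 - 1 / (d : ℝ)) := by
        gcongr
        exact Real.one_div_two_mul_le_one_sub_two_rpow_neg hd0
    _ = #A ^ (1 - 1 / (d : ℝ)) - 2 ^ (-(1 / (d : ℝ))) * #A ^ (1 - 1 / (d : ℝ)) := by ring
    _ ≤ #(A.image (update · i 0)) - #(fullLines n A i) := sub_le_sub hproj hfull
    _ ≤ #(boxBoundary d n A) := by linarith
end

section
/- Let C, D, E be subsets of Z^d with C and D connected in the nearest-neighbour graph, C, D, E pairwise disjoint, and suppose every nearest-neighbour path from C to D intersects E. Then there exists a subset of E that is connected in the l∞-adjacency graph L (where x ~ y iff max_i |x_i - y_i| = 1) and that also separates C and D. -/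
open MeasureTheory ProbabilityTheory Filter

/-- `ℒ`-adjacency (sup-norm adjacency): `x ≠ y` and `max_i |x_i - y_i| = 1`. -/
def lAdj {d : ℕ} (x y : Pt d) : Prop := x ≠ y ∧ ∀ i, (x i - y i).natAbs ≤ 1

/-- A set of sites is connected in the `ℒ` (sup-norm adjacency) graph. -/
def lConnSet {d : ℕ} (A : Set (Pt d)) : Prop :=
  ∀ x ∈ A, ∀ y ∈ A, Relation.ReflTransGen (fun a b => lAdj a b ∧ a ∈ A ∧ b ∈ A) x y

/-- `E` separates `C` and `D`: every finite nearest-neighbour path from a point of `C`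
to a point of `D` intersects `E`. -/
def separates {d : ℕ} (E C D : Set (Pt d)) : Prop :=
  ∀ (k : ℕ) (p : ℕ → Pt d), p 0 ∈ C → p k ∈ D →
    (∀ j < k, nnAdj (p j) (p (j+1))) → ∃ j ≤ k, p j ∈ E

/-!
Let `A` be the set of points reachable from `C` without meeting `E`, `E₁ ⊆ E` its outer
boundary, `B` the set of points reachable from `D` without meeting `E₁`, and `E₂ ⊆ E₁` the outer
boundary of `B`. A path from `C` to `D` has to leave `A`, and it can only do so through `E₁`;
likewise, run backwards, it leaves `B` through `E₂`. So `E₂` separates `C` and `D`.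

For `ℒ`-connectedness fix `x ∈ E₂` and let `X` be its `ℒ`-component in `E₂`. The `ℤ/2`-valued
edge function counting steps from `B` to `X` is a cocycle on `ℤ^d`: the points of `E₂` on a unit
square are pairwise `ℒ`-adjacent. As every closed walk in `ℤ^d` reduces to the empty one by
exchanging the two sides of a unit square and cancelling backtracks, the sum along any closed
walk vanishes. For `y ∈ E₂`, close up the walk `b → x → a ⇝ a' → y → b' ⇝ b`, where `a, a' ∈ A`
and `b, b' ∈ B` are neighbours of `x, y` and the legs `⇝` run inside the connected sets `A` and
`B`, which are disjoint. Only the steps `b → x` and `y → b'` can count, so `y ∈ X`.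
-/

open Relation

lemma List.exists_eq_append_cons_notMem {α : Type*} {a : α} :
    ∀ {l : List α}, a ∈ l → ∃ m r, l = m ++ a :: r ∧ a ∉ m
  | b :: l, h => by
    by_cases hb : b = a
    · exact ⟨[], l, by rw [hb]; rfl, List.not_mem_nil⟩
    · obtain ⟨m, r, rfl, hm⟩ :=
        List.exists_eq_append_cons_notMem ((List.mem_cons.mp h).resolve_left (Ne.symm hb))
      exact ⟨b :: m, r, rfl, by simp [hm, Ne.symm hb]⟩

lemma exists_path_of_reflTransGen {α : Type*} {r : α → α → Prop} {u v : α}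
    (h : ReflTransGen r u v) :
    ∃ (k : ℕ) (p : ℕ → α), p 0 = u ∧ p k = v ∧ ∀ j < k, r (p j) (p (j + 1)) := by
  induction h with
  | refl => exact ⟨0, fun _ => u, rfl, rfl, by omega⟩
  | @tail b z _ hbz ih =>
    obtain ⟨k, p, h0, hk, hstep⟩ := ih
    refine ⟨k + 1, fun j => if j ≤ k then p j else z, by simp [h0], by simp, fun j hj => ?_⟩
    rcases Nat.lt_succ_iff_lt_or_eq.mp hj with hj | rfl
    · simpa [hj.le, Nat.succ_le_of_lt hj] using hstep j hj
    · simpa [hk] using hbz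

lemma exists_mem_notMem_succ {α : Type*} (R : Set α) (p : ℕ → α) (h0 : p 0 ∈ R) :
    ∀ k, p k ∉ R → ∃ j < k, p j ∈ R ∧ p (j + 1) ∉ R
  | 0, hk => absurd h0 hk
  | k + 1, hk => by
    by_cases hpk : p k ∈ R
    · exact ⟨k, k.lt_succ_self, hpk, hk⟩
    · obtain ⟨j, hj, h⟩ := exists_mem_notMem_succ R p h0 k hpk
      exact ⟨j, hj.trans k.lt_succ_self, h⟩

variable {d : ℕ}

lemma nnAdj.symm {x y : Pt d} (h : nnAdj x y) : nnAdj y x := by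
  unfold nnAdj at *
  rw [← h]
  exact Finset.sum_congr rfl fun i _ => by omega

def nnWithin (A : Set (Pt d)) (a b : Pt d) : Prop := nnAdj a b ∧ a ∈ A ∧ b ∈ A

instance (A : Set (Pt d)) : Std.Symm (nnWithin A) := ⟨fun _ _ h => ⟨h.1.symm, h.2.2, h.2.1⟩⟩

lemma reflTransGen_nnWithin_comm {A : Set (Pt d)} {x y : Pt d}
    (h : ReflTransGen (nnWithin A) x y) : ReflTransGen (nnWithin A) y x :=
  Std.Symm.symm _ _ h

def IsUnitStep (s : Pt d) : Prop := ∑ i, (s i).natAbs = 1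

lemma nnAdj_iff_isUnitStep_sub {x y : Pt d} : nnAdj x y ↔ IsUnitStep (y - x) := by
  have : ∑ i, (x i - y i).natAbs = ∑ i, ((y - x) i).natAbs :=
    Finset.sum_congr rfl fun i _ => by simp only [Pi.sub_apply]; omega
  rw [nnAdj, IsUnitStep, this]

lemma nnAdj_add_iff {u s : Pt d} : nnAdj u (u + s) ↔ IsUnitStep s := by
  rw [nnAdj_iff_isUnitStep_sub, add_sub_cancel_left]

namespace IsUnitStep

variable {s t : Pt d}

lemma natAbs_le_one (hs : IsUnitStep s) (i : Fin d) : (s i).natAbs ≤ 1 :=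
  hs ▸ Finset.single_le_sum (f := fun j => (s j).natAbs) (fun _ _ => Nat.zero_le _)
    (Finset.mem_univ i)

lemma exists_eq_single (hs : IsUnitStep s) :
    ∃ i, (s i).natAbs = 1 ∧ ∀ j ≠ i, s j = 0 := by
  classical
  obtain ⟨i, hi⟩ : ∃ i, s i ≠ 0 := by
    by_contra! h
    simp [IsUnitStep, h] at hs
  refine ⟨i, by have := hs.natAbs_le_one i; omega, fun j hji => ?_⟩
  have hpair := Finset.sum_le_sum_of_subset (f := fun k => (s k).natAbs)
    (Finset.subset_univ {i, j})
  rw [Finset.sum_pair hji.symm] at hpair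
  unfold IsUnitStep at hs
  omega

lemma eq_or_eq_neg_or_disjoint (hs : IsUnitStep s) (ht : IsUnitStep t) :
    t = s ∨ t = -s ∨ ∀ i, s i = 0 ∨ t i = 0 := by
  obtain ⟨i, hsi, hs0⟩ := hs.exists_eq_single
  obtain ⟨j, htj, ht0⟩ := ht.exists_eq_single
  by_cases hij : j = i
  · subst hij
    have eq_on : ∀ k ≠ j, t k = s k := fun k hk => by rw [hs0 k hk, ht0 k hk]
    rcases Int.natAbs_eq_natAbs_iff.mp (htj.trans hsi.symm) with h | h
    · exact .inl <| funext fun k => if hk : k = j then hk ▸ h else eq_on k hk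
    · refine .inr <| .inl <| funext fun k => if hk : k = j then hk ▸ h else ?_
      simp [eq_on k hk, hs0 k hk]
  · exact .inr <| .inr fun k => if hk : k = i then .inr (ht0 k (hk ▸ Ne.symm hij)) else
      .inl (hs0 k hk)

end IsUnitStep

lemma neg_mem_of_sum_eq_zero {s : Pt d} {l : List (Pt d)} (hl : ∀ t ∈ s :: l, IsUnitStep t)
    (h0 : (s :: l).sum = 0) : -s ∈ l := by
  by_contra hneg
  have hs := hl s List.mem_cons_self
  obtain ⟨i, hsi, -⟩ := hs.exists_eq_single
  have hterm : ∀ t ∈ l, 0 ≤ s i * t i := fun t ht => by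
    rcases hs.eq_or_eq_neg_or_disjoint (hl t (List.mem_cons_of_mem _ ht)) with rfl | rfl | h
    · exact mul_self_nonneg _
    · exact absurd ht hneg
    · rcases h i with h | h <;> simp [h]
  have hsum : 0 ≤ s i * l.sum i := by
    rw [Pi.list_sum_apply, ← List.sum_map_mul_left]
    exact List.sum_nonneg (by simpa using hterm)
  have := congrFun h0 i
  rw [List.sum_cons, Pi.add_apply, Pi.zero_apply] at this
  have hsq : s i * s i = 1 := by rcases Int.natAbs_eq_iff.mp hsi with h | h <;> simp [h]
  rw [show l.sum i = -s i by omega, mul_neg, hsq] at hsum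
  omega

section WalkSum

variable {G : Type*} [AddCommGroup G]

def walkSum (f : Pt d → Pt d → G) : Pt d → List (Pt d) → G
  | _, [] => 0
  | u, s :: l => f u (u + s) + walkSum f (u + s) l

lemma walkSum_append (f : Pt d → Pt d → G) :
    ∀ (l : List (Pt d)) (u : Pt d) (l' : List (Pt d)),
      walkSum f u (l ++ l') = walkSum f u l + walkSum f (u + l.sum) l'
  | [], u, l' => by simp [walkSum]
  | s :: l, u, l' => by simp [walkSum, walkSum_append f l, add_assoc]

structure IsCocycle (f : Pt d → Pt d → G) : Prop where
  antisymm : ∀ u v, f v u = -f u v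
  square : ∀ u a b, IsUnitStep a → IsUnitStep b → (∀ i, a i = 0 ∨ b i = 0) →
    f u (u + a) + f (u + a) (u + a + b) = f u (u + b) + f (u + b) (u + a + b)

namespace IsCocycle

variable {f : Pt d → Pt d → G}

/-- A step `s` is commuted past the steps of `m` by the square relation until it meets `-s`. -/
lemma walkSum_cancel (hf : IsCocycle f) {s : Pt d} (hs : IsUnitStep s) :
    ∀ (m : List (Pt d)) (u : Pt d) (r : List (Pt d)), (∀ t ∈ m, IsUnitStep t) → -s ∉ m →
      walkSum f u (s :: (m ++ -s :: r)) = walkSum f u (m ++ r)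
  | [], u, r, _, _ => by
    simp only [walkSum, List.nil_append, add_neg_cancel_right, hf.antisymm (u + s) u,
      neg_add_cancel_left]
  | t :: m, u, r, hm, hneg => by
    have ih := walkSum_cancel hf hs m
    have hmt : ∀ t ∈ m, IsUnitStep t := fun t' ht' => hm t' (List.mem_cons_of_mem _ ht')
    rcases hs.eq_or_eq_neg_or_disjoint (hm t List.mem_cons_self) with rfl | rfl | hdisj
    · simp only [walkSum, List.cons_append, ← ih (u + t) r hmt (fun h => hneg (.tail _ h))]
    · exact absurd List.mem_cons_self hneg
    · calc walkSum f u (s :: (t :: m ++ -s :: r))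
          = f u (u + s) + f (u + s) (u + s + t) + walkSum f (u + s + t) (m ++ -s :: r) := by
            simp only [walkSum, List.cons_append, add_assoc]
        _ = f u (u + t) + (f (u + t) (u + t + s) + walkSum f (u + t + s) (m ++ -s :: r)) := by
            rw [hf.square u s t hs (hm t List.mem_cons_self) hdisj, add_right_comm u s t,
              add_assoc]
        _ = f u (u + t) + walkSum f (u + t) (m ++ r) := by
            rw [← ih (u + t) r hmt (fun h => hneg (.tail _ h))]
            rfl
        _ = walkSum f u (t :: m ++ r) := rfl

lemma walkSum_eq_zero (hf : IsCocycle f) (u : Pt d) :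
    ∀ l : List (Pt d), (∀ s ∈ l, IsUnitStep s) → l.sum = 0 → walkSum f u l = 0
  | [], _, _ => rfl
  | s :: l, hl, h0 => by
    obtain ⟨m, r, hsplit, hm⟩ := List.exists_eq_append_cons_notMem (neg_mem_of_sum_eq_zero hl h0)
    have hlen : (m ++ r).length < (s :: l).length := by simp [hsplit]
    have hmr : ∀ t ∈ m ++ r, IsUnitStep t := fun t ht => hl t (by rw [hsplit]; simp at ht ⊢; tauto)
    rw [hsplit, hf.walkSum_cancel (hl s List.mem_cons_self) m u r (fun t ht => hmr t (by simp [ht]))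
      hm]
    refine hf.walkSum_eq_zero u (m ++ r) hmr ?_
    rw [← h0, hsplit]
    simp only [List.sum_cons, List.sum_append]
    abel
termination_by l => l.length
decreasing_by exact hlen

end IsCocycle

def HasWalkSum (f : Pt d → Pt d → G) (u v : Pt d) (c : G) : Prop :=
  ∃ l : List (Pt d), (∀ s ∈ l, IsUnitStep s) ∧ u + l.sum = v ∧ walkSum f u l = c

namespace HasWalkSum

variable {f : Pt d → Pt d → G} {u v w : Pt d} {c c' : G}

lemma refl (f : Pt d → Pt d → G) (u : Pt d) : HasWalkSum f u u 0 :=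
  ⟨[], by simp, by simp, rfl⟩

lemma single (h : nnAdj u v) : HasWalkSum f u v (f u v) :=
  ⟨[v - u], by simpa [nnAdj_iff_isUnitStep_sub] using h, by simp, by simp [walkSum]⟩

lemma trans (h : HasWalkSum f u v c) (h' : HasWalkSum f v w c') :
    HasWalkSum f u w (c + c') := by
  obtain ⟨l, hl, rfl, rfl⟩ := h
  obtain ⟨l', hl', rfl, rfl⟩ := h'
  exact ⟨l ++ l', fun s hs => (List.mem_append.mp hs).elim (hl s) (hl' s), by simp [add_assoc],
    walkSum_append f l u l'⟩

lemma of_reflTransGen {S : Set (Pt d)} (hS : ∀ a ∈ S, ∀ b ∈ S, nnAdj a b → f a b = 0)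
    (h : ReflTransGen (nnWithin S) u v) : HasWalkSum f u v 0 := by
  induction h with
  | refl => exact refl f u
  | tail _ hbc ih => simpa [hS _ hbc.2.1 _ hbc.2.2 hbc.1] using ih.trans (single hbc.1)

lemma eq_zero_of_isCocycle (hf : IsCocycle f) (h : HasWalkSum f u u c) : c = 0 := by
  obtain ⟨l, hl, hsum, rfl⟩ := h
  exact hf.walkSum_eq_zero u l hl (by simpa using hsum)

end HasWalkSum

end WalkSum

section Crossing

variable {B X : Set (Pt d)} {p q : Pt d}

/-- Equals `1` exactly when one endpoint of `pq` lies in `B` and the other in `X \ B`. -/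
noncomputable def crossing (B X : Set (Pt d)) (p q : Pt d) : ZMod 2 :=
  B.indicator 1 p * (X \ B).indicator 1 q + (X \ B).indicator 1 p * B.indicator 1 q

lemma crossing_comm (B X : Set (Pt d)) (p q : Pt d) : crossing B X p q = crossing B X q p := by
  unfold crossing
  ring

lemma crossing_of_notMem (hp : p ∉ B) (hq : q ∉ B) : crossing B X p q = 0 := by
  simp [crossing, hp, hq]

lemma crossing_of_mem (hp : p ∈ B) (hq : q ∈ B) : crossing B X p q = 0 := by
  simp [crossing, hp, hq]

lemma crossing_of_mem_of_notMem (hp : p ∈ B) (hq : q ∉ B) :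
    crossing B X p q = X.indicator 1 q := by
  by_cases hqX : q ∈ X <;> simp [crossing, hp, hq, hqX]

lemma crossing_eq_mul_add (c : ZMod 2)
    (hp : p ∉ B → q ∈ B → X.indicator 1 p = c) (hq : q ∉ B → p ∈ B → X.indicator 1 q = c) :
    crossing B X p q = c * (B.indicator 1 p + B.indicator 1 q) := by
  by_cases hpB : p ∈ B <;> by_cases hqB : q ∈ B
  · rw [crossing_of_mem hpB hqB]
    simp only [Set.indicator_of_mem hpB, Set.indicator_of_mem hqB, Pi.one_apply]
    ring_nf
    reduce_mod_char
  · simp [crossing_of_mem_of_notMem hpB hqB, hq hqB hpB, hpB, hqB]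
  · simp [crossing_comm B X p q, crossing_of_mem_of_notMem hqB hpB, hp hpB hqB, hpB, hqB]
  · simp [crossing_of_notMem hpB hqB, hpB, hqB]

/-- If the outer boundary of `B` lies in `F` and `X` is a union of `ℒ`-components of `F`, the
`F`-vertices of a unit square are pairwise `ℒ`-adjacent, so either all of them lie in `X` or none
does; the crossing count around the square is then zero or that of `∂B`, which is even. -/
lemma isCocycle_crossing {F : Set (Pt d)}
    (hF : ∀ p q, p ∉ B → q ∈ B → nnAdj p q → p ∈ F)
    (hX : ∀ p ∈ F, ∀ q ∈ F, lAdj p q → p ∈ X → q ∈ X) : IsCocycle (crossing B X) := by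
  classical
  refine ⟨fun u v => by rw [crossing_comm, ZMod.neg_eq_self_mod_two], ?_⟩
  intro u a b ha hb hab
  set Q : Set (Pt d) := {u, u + a, u + b, u + a + b}
  have hQ : ∀ v ∈ Q, ∀ w ∈ Q, ∀ i, (v i - w i).natAbs ≤ 1 := by
    intro v hv w hw i
    have := ha.natAbs_le_one i
    have := hb.natAbs_le_one i
    have := hab i
    simp only [Q, Set.mem_insert_iff, Set.mem_singleton_iff] at hv hw
    rcases hv with rfl | rfl | rfl | rfl <;> rcases hw with rfl | rfl | rfl | rfl <;>
      simp only [Pi.add_apply, sub_self] <;> omega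
  set c : ZMod 2 := if ∃ w ∈ Q, w ∈ F ∧ w ∈ X then 1 else 0
  have hc : ∀ v ∈ Q, v ∈ F → X.indicator 1 v = c := by
    intro v hv hvF
    have : v ∈ X ↔ ∃ w ∈ Q, w ∈ F ∧ w ∈ X := by
      refine ⟨fun hvX => ⟨v, hv, hvF, hvX⟩, fun ⟨w, hw, hwF, hwX⟩ => ?_⟩
      by_cases hwv : w = v
      · exact hwv ▸ hwX
      · exact hX w hwF v hvF ⟨hwv, hQ w hw v hv⟩ hwX
    by_cases hvX : v ∈ X <;> simp [c, hvX, ← this]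
  have edge : ∀ v ∈ Q, ∀ w ∈ Q, nnAdj v w →
      crossing B X v w = c * (B.indicator 1 v + B.indicator 1 w) := fun v hv w hw hvw =>
    crossing_eq_mul_add c (fun hvB hwB => hc v hv (hF v w hvB hwB hvw))
      (fun hwB hvB => hc w hw (hF w v hwB hvB hvw.symm))
  have hbQ : u + b ∈ Q := by simp [Q]
  rw [edge u (by simp [Q]) _ (by simp [Q]) (nnAdj_add_iff.mpr ha),
    edge _ (by simp [Q]) _ (by simp [Q]) (nnAdj_add_iff.mpr hb),
    edge u (by simp [Q]) _ hbQ (nnAdj_add_iff.mpr hb),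
    edge _ hbQ _ (by simp [Q]) (add_right_comm u a b ▸ nnAdj_add_iff.mpr ha)]
  ring_nf
  reduce_mod_char

end Crossing

lemma lConnSet_boundary_between {A B G : Set (Pt d)} (hA : connSet A) (hB : connSet B)
    (hAB : Disjoint A B) (hGB : Disjoint G B) (hGA : ∀ x ∈ G, ∃ a ∈ A, nnAdj a x)
    (hBG : ∀ x ∈ G, ∃ b ∈ B, nnAdj b x) (hbdry : ∀ p q, p ∉ B → q ∈ B → nnAdj p q → p ∈ G) :
    lConnSet G := by
  intro x hx y hy
  obtain ⟨a, ha, hax⟩ := hGA x hx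
  obtain ⟨b, hb, hbx⟩ := hBG x hx
  obtain ⟨a', ha', hay⟩ := hGA y hy
  obtain ⟨b', hb', hby⟩ := hBG y hy
  set X := {z | ReflTransGen (fun p q => lAdj p q ∧ p ∈ G ∧ q ∈ G) x z}
  have hcocycle : IsCocycle (crossing B X) :=
    isCocycle_crossing hbdry fun p hp q hq hpq hpX => hpX.tail ⟨hpq, hp, hq⟩
  have hA0 : ∀ p ∈ A, ∀ q ∈ A, nnAdj p q → crossing B X p q = 0 := fun p hp q hq _ =>
    crossing_of_notMem (hAB.notMem_of_mem_left hp) (hAB.notMem_of_mem_left hq)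
  have hB0 : ∀ p ∈ B, ∀ q ∈ B, nnAdj p q → crossing B X p q = 0 := fun p hp q hq _ =>
    crossing_of_mem hp hq
  have hloop := (((((HasWalkSum.single hbx).trans (.single hax.symm)).trans
    (.of_reflTransGen hA0 (hA a ha a' ha'))).trans (.single hay)).trans (.single hby.symm)).trans
    (.of_reflTransGen hB0 (hB b' hb' b hb))
  have hxB := hGB.notMem_of_mem_left hx
  have hyB := hGB.notMem_of_mem_left hy
  have hsum := hloop.eq_zero_of_isCocycle hcocycle
  rw [crossing_of_mem_of_notMem hb hxB, crossing_of_notMem hxB (hAB.notMem_of_mem_left ha),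
    crossing_of_notMem (hAB.notMem_of_mem_left ha') hyB, crossing_comm,
    crossing_of_mem_of_notMem hb' hyB, Set.indicator_of_mem (show x ∈ X from .refl)] at hsum
  by_contra hyX
  simp [Set.indicator_of_notMem (show y ∉ X from hyX)] at hsum

def reach (S F : Set (Pt d)) : Set (Pt d) := {x | ∃ c ∈ S, ReflTransGen (nnWithin Fᶜ) c x}

def outerBoundary (A E : Set (Pt d)) : Set (Pt d) := {e | e ∈ E ∧ ∃ a ∈ A, nnAdj a e}

section Reach

variable {S F : Set (Pt d)}

lemma subset_reach : S ⊆ reach S F := fun c hc => ⟨c, hc, .refl⟩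

lemma reach_anti {F' : Set (Pt d)} (h : F ⊆ F') : reach S F' ⊆ reach S F :=
  fun _ ⟨c, hc, hp⟩ => ⟨c, hc, ReflTransGen.mono (fun _ _ hab => ⟨hab.1, fun h' => hab.2.1 (h h'),
    fun h' => hab.2.2 (h h')⟩) _ _ hp⟩

lemma disjoint_reach (hSF : Disjoint S F) : Disjoint (reach S F) F := by
  refine Set.disjoint_left.mpr fun x ⟨c, hc, hp⟩ => ?_
  cases hp.cases_tail with
  | inl h => exact h ▸ hSF.notMem_of_mem_left hc
  | inr h => exact h.elim fun _ h => h.2.2.2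

lemma mem_reach_of_nnAdj (hSF : Disjoint S F) {x y : Pt d} (hx : x ∈ reach S F)
    (hxy : nnAdj x y) (hy : y ∉ F) : y ∈ reach S F :=
  hx.elim fun c ⟨hc, hp⟩ => ⟨c, hc, hp.tail ⟨hxy, (disjoint_reach hSF).notMem_of_mem_left hx, hy⟩⟩

lemma mem_outerBoundary_of_nnAdj (hSF : Disjoint S F) {x y : Pt d} (hx : x ∈ reach S F)
    (hy : y ∉ reach S F) (hxy : nnAdj x y) : y ∈ outerBoundary (reach S F) F :=
  ⟨by_contra fun hyF => hy (mem_reach_of_nnAdj hSF hx hxy hyF), x, hx, hxy⟩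

lemma connSet_reach (hS : connSet S) : connSet (reach S F) := by
  have hwithin : ∀ {c x}, c ∈ S → ReflTransGen (nnWithin Fᶜ) c x →
      ReflTransGen (nnWithin (reach S F)) c x := fun hc hp => by
    induction hp with
    | refl => exact .refl
    | tail hab hbz ih => exact ih.tail ⟨hbz.1, ⟨_, hc, hab⟩, ⟨_, hc, hab.tail hbz⟩⟩
  rintro x ⟨c, hc, hcx⟩ y ⟨c', hc', hcy⟩
  have hcc' : ReflTransGen (nnWithin (reach S F)) c c' :=
    ReflTransGen.mono (fun _ _ h => ⟨h.1, subset_reach h.2.1, subset_reach h.2.2⟩) _ _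
      (hS c hc c' hc')
  exact ((reflTransGen_nnWithin_comm (hwithin hc hcx)).trans hcc').trans (hwithin hc' hcy)

end Reach

section Separation

variable {C D E : Set (Pt d)}

lemma separates.symm (h : separates E C D) : separates E D C := by
  intro k p h0 hk hadj
  obtain ⟨j, hj, hjE⟩ := h k (fun j => p (k - j)) (by simpa using hk) (by simpa using h0)
    fun j hj => by
      rw [show k - j = k - (j + 1) + 1 by omega]
      exact (hadj _ (by omega)).symm
  exact ⟨k - j, by omega, hjE⟩

lemma separates.disjoint_reach (h : separates E C D) (hCE : Disjoint C E) :
    Disjoint (reach C E) D := by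
  refine Set.disjoint_left.mpr fun z ⟨c, hc, hcz⟩ hz => ?_
  obtain ⟨k, p, rfl, rfl, hstep⟩ := exists_path_of_reflTransGen hcz
  obtain ⟨j, hj, hjE⟩ := h k p hc hz fun j hj => (hstep j hj).1
  cases j with
  | zero => exact hCE.notMem_of_mem_left hc hjE
  | succ j => exact (hstep j hj).2.2 hjE

lemma separates.disjoint_reach_reach (h : separates E C D) (hCE : Disjoint C E) :
    Disjoint (reach C E) (reach D E) := by
  refine Set.disjoint_left.mpr fun z ⟨c, hc, hcz⟩ ⟨d', hd', hdz⟩ => ?_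
  exact (h.disjoint_reach hCE).notMem_of_mem_left
    ⟨c, hc, hcz.trans (reflTransGen_nnWithin_comm hdz)⟩ hd'

lemma separates.outerBoundary_reach (h : separates E C D) (hCE : Disjoint C E) :
    separates (outerBoundary (reach C E) E) C D := by
  intro k p h0 hk hadj
  obtain ⟨j, hj, hjA, hjA'⟩ := exists_mem_notMem_succ (reach C E) p (subset_reach h0) k
    ((h.disjoint_reach hCE).notMem_of_mem_right hk)
  exact ⟨j + 1, hj, mem_outerBoundary_of_nnAdj hCE hjA hjA' (hadj j hj)⟩

end Separation

theorem stmt5_general (d : ℕ) (C D E : Set (Pt d))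
    (hCconn : connSet C) (hDconn : connSet D)
    (hCE : Disjoint C E) (hDE : Disjoint D E)
    (hsep : separates E C D) :
    ∃ E' ⊆ E, lConnSet E' ∧ separates E' C D := by
  set E₁ := outerBoundary (reach C E) E
  have hsep₁ : separates E₁ C D := hsep.outerBoundary_reach hCE
  have hE₁ : E₁ ⊆ E := fun _ h => h.1
  have hDE₁ : Disjoint D E₁ := hDE.mono_right hE₁
  refine ⟨outerBoundary (reach D E₁) E₁, fun _ h => hE₁ h.1, ?_,
    (hsep₁.symm.outerBoundary_reach hDE₁).symm⟩
  refine lConnSet_boundary_between (connSet_reach hCconn) (connSet_reach hDconn) ?_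
    ((disjoint_reach hDE₁).symm.mono_left fun _ h => h.1) (fun _ h => h.1.2) (fun _ h => h.2)
    fun p q hp hq hpq => mem_outerBoundary_of_nnAdj hDE₁ hq hp hpq.symm
  exact (hsep₁.disjoint_reach_reach (hCE.mono_right hE₁)).mono_left (reach_anti hE₁)

/-- second assertion of Lemma lemmbul. If `C, D, E ⊆ ℤ^d` with `C`
and `D` connected in the nearest-neighbour graph, the three sets pairwise disjoint, and
`E` separating `C` from `D`, then some `ℒ`-connected subset of `E` also separates
`C` and `D`. -/
theorem stmt5 (d : ℕ) (hd : 2 ≤ d) (C D E : Set (Pt d))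
    (hCconn : connSet C) (hDconn : connSet D)
    (hCD : Disjoint C D) (hCE : Disjoint C E) (hDE : Disjoint D E)
    (hsep : separates E C D) :
    ∃ E' ⊆ E, lConnSet E' ∧ separates E' C D :=
  stmt5_general d C D E hCconn hDconn hCE hDE hsep
end
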